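/- arXiv:1206.6704 — 2 statements merged into one kernel-verified Lean document; each statement's English description precedes it below -/
import Mathlib

section
/- If α is an alternating p-form on V and r = n − p (so that e^I ∧ α has top degree n for each I ∈ Inc(r,n)), then Σ_{I ∈ Inc(r,n)} i_I (e^I ∧ α) = α. -/
/- Setting: `V` is an `n`-dimensional real vector space with basis `X_1, …, X_n`
(`b : Basis (Fin n) ℝ V`) and dual basis `e^1, …, e^n` (`b.coord`).  `Λ^p V*` is
modelled by `AlternatingMap ℝ V ℝ (Fin p)`, with the wedge product in the
shuffle (determinant) convention and interior contraction
`(i_v α)(v₁,…,v_{p-1}) = α (v, v₁, …, v_{p-1})`. -/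

open scoped TensorProduct

noncomputable section

namespace SEM

variable {V : Type*} [AddCommGroup V] [Module ℝ V]

/-- Alternating `p`-forms on `V`. -/
abbrev Form (V : Type*) [AddCommGroup V] [Module ℝ V] (p : ℕ) := V [⋀^Fin p]→ₗ[ℝ] ℝ

/-- The wedge product of alternating forms (shuffle/determinant convention). -/
noncomputable def wedge {p q : ℕ} (α : Form V p) (β : Form V q) : Form V (p + q) :=
  AlternatingMap.domDomCongr finSumFinEquiv
    ((TensorProduct.lid ℝ ℝ).toLinearMap.compAlternatingMap (α.domCoprod β))

/-- Re-indexing an alternating form along an equality of degrees. -/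
def castF {m k : ℕ} (h : m = k) (α : Form V m) : Form V k :=
  AlternatingMap.domDomCongr (finCongr h) α

/-- A linear functional regarded as an alternating 1-form. -/
def oneForm (f : Module.Dual ℝ V) : Form V 1 :=
  AlternatingMap.ofSubsingleton ℝ V ℝ 0 f

/-- Interior contraction `i_v`: `(icontr v α) (v₁,…,v_p) = α (v, v₁, …, v_p)`. -/
def icontr {p : ℕ} (v : V) (α : Form V (p + 1)) : Form V p :=
  α.curryLeft v

/-- Iterated interior contraction `i_J = i_{J_r} ∘ ⋯ ∘ i_{J_1}` with the first entry of
the list `J` contracted first, so that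
`(icontrFam J α) (w₁,…) = α (J 1, J 2, …, J r, w₁, …)`. -/
def icontrFam {p : ℕ} : {r : ℕ} → (J : Fin r → V) → Form V (p + r) → Form V p
  | 0, _, α => α
  | _ + 1, J, α => icontrFam (fun i => J i.succ) (icontr (J 0) α)

/-- The composite operator `i_{v_1} ∘ i_{v_2} ∘ ⋯ ∘ i_{v_q}` (the last entry of `v`
is contracted first). -/
def icontrComp : {p q : ℕ} → (v : Fin q → V) → Form V (p + q) → Form V p
  | _, 0, _, α => α
  | p, q + 1, v, α =>
      icontr (v 0) (icontrComp (p := p + 1) (fun i => v i.succ) (castF (by omega) α))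

/-- The wedge `e^{I_1} ∧ ⋯ ∧ e^{I_r}` of a family of `1`-forms. -/
def eFam : {r : ℕ} → (Fin r → Module.Dual ℝ V) → Form V r
  | 0, _ => AlternatingMap.constOfIsEmpty ℝ V (Fin 0) 1
  | r + 1, f => castF (Nat.add_comm 1 r) (wedge (oneForm (f 0)) (eFam fun i => f i.succ))

/-- Strict monotonicity is decidable, so that the set `Inc(r,n)` of strictly increasing
lists `(I_1 < ⋯ < I_r)` with entries in `{1,…,n}`, modelled as
`{I : Fin r → Fin n // StrictMono I}`, is a finite type. -/
instance {r n : ℕ} : DecidablePred (StrictMono : (Fin r → Fin n) → Prop) := fun _ =>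
  decidable_of_iff (∀ a b, a < b → _ < _) Iff.rfl

/-- The sign `ε(Î)` of the permutation sorting the free list `Î` into increasing order,
equal to `0` when `Î` has a repeated entry. -/
def eps {m n : ℕ} (f : Fin m → Fin n) : ℤ :=
  if Function.Injective f then (Equiv.Perm.sign (Tuple.sort f) : ℤ) else 0

end SEM

/-!
Both sides are alternating, so it suffices to evaluate them on basis vectors
`X_{v_1}, …, X_{v_p}` with `v` injective. The summand of `I` is the top form `e^I ∧ α` evaluated
on `(X_I, X_v)`; it vanishes when `I` and `v` share an entry, which leaves only the increasing
enumeration `I₀` of the complement of `v`. For `I₀` every `e^{I₀_s}` annihilates every `X_{v_t}`,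
so only the trivial shuffle survives in the wedge product and the summand is
`e^{I₀}(X_{I₀}) · α(X_v) = α(X_v)`.
-/

namespace AlternatingMap

open Equiv

section Apply

variable {R M N ι : Type*} [Semiring R] [AddCommMonoid M] [Module R M] [AddCommMonoid N]
  [Module R N]

instance : IsZeroApply (M [⋀^ι]→ₗ[R] N) (ι → M) N := ⟨fun _ => rfl⟩

instance : IsAddApply (M [⋀^ι]→ₗ[R] N) (ι → M) N := ⟨fun _ _ _ => rfl⟩

end Apply

variable {ιa ιb : Type*} [Fintype ιa] [Fintype ιb] [DecidableEq ιa] [DecidableEq ιb]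
  {R M N₁ N₂ : Type*} [CommSemiring R] [AddCommMonoid M] [Module R M] [AddCommGroup N₁]
  [Module R N₁] [AddCommGroup N₂] [Module R N₂]

theorem domCoprod_apply_eq_tmul (a : M [⋀^ιa]→ₗ[R] N₁) (b : M [⋀^ιb]→ₗ[R] N₂)
    (v : ιa ⊕ ιb → M)
    (ha : ∀ (σ : Perm (ιa ⊕ ιb)) (i : ιa) (j : ιb), σ (Sum.inl i) = Sum.inr j →
      a (fun k => v (σ (Sum.inl k))) = 0) :
    a.domCoprod b v = a (fun i => v (Sum.inl i)) ⊗ₜ b (fun j => v (Sum.inr j)) := by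
  rw [domCoprod_apply, sum_apply]
  refine (Fintype.sum_eq_single (Quotient.mk'' 1) fun σ hσ => ?_).trans ?_
  · induction σ using Quotient.inductionOn' with
    | h σ =>
    obtain ⟨i, j, hij⟩ : ∃ i j, σ (Sum.inl i) = Sum.inr j := by
      by_contra! h
      refine hσ (Quotient.sound' (QuotientGroup.leftRel_apply.mpr ?_))
      rw [mul_one]
      refine Subgroup.inv_mem _ (Perm.mem_sumCongrHom_range_of_perm_mapsTo_inl ?_)
      rintro _ ⟨i, rfl⟩
      cases hσi : σ (Sum.inl i) with
      | inl k => exact ⟨k, rfl⟩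
      | inr j => exact absurd hσi (h i j)
    simp [domCoprod.summand_mk'', ha σ i j hij]
  · simp [domCoprod.summand_mk'']

end AlternatingMap

namespace SEM

variable {V W : Type*} [AddCommGroup V] [Module ℝ V] [AddCommGroup W] [Module ℝ W]

theorem castF_apply {m k : ℕ} (h : m = k) (θ : Form V m) (u : Fin k → V) :
    castF h θ u = θ (u ∘ Fin.cast h) := rfl

theorem oneForm_apply (f : Module.Dual ℝ V) (u : Fin 1 → V) : oneForm f u = f (u 0) := rfl

theorem icontrFam_apply {p : ℕ} : ∀ {r : ℕ} (J : Fin r → V) (θ : Form V (p + r))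
    (w : Fin p → V), icontrFam J θ w = θ (Fin.append J w ∘ Fin.cast (Nat.add_comm p r))
  | 0, J, θ, w => by
    rw [icontrFam, Fin.append_left_nil J w rfl]
    rfl
  | r + 1, J, θ, w => by
    rw [icontrFam, icontrFam_apply]
    show θ (Fin.cons (J 0) _) = _
    congr 1
    ext i
    refine Fin.cases rfl (fun k => ?_) i
    by_cases h : (k : ℕ) < r
    · simp [Fin.append, Fin.addCases, h]
      rfl
    · simp [Fin.append, Fin.addCases, h]
      exact congrArg w (Fin.ext (by simp))

theorem icontrFam_castF_apply {r p : ℕ} (J : Fin r → V) (θ : Form V (r + p))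
    (w : Fin p → V) : icontrFam J (castF (Nat.add_comm r p) θ) w = θ (Fin.append J w) := by
  rw [icontrFam_apply, castF_apply]
  rfl

theorem wedge_append_apply {q₁ q₂ : ℕ} (β : Form V q₁) (γ : Form V q₂)
    (x : Fin q₁ → V) (y : Fin q₂ → V) :
    wedge β γ (Fin.append x y) = TensorProduct.lid ℝ ℝ (β.domCoprod γ (Sum.elim x y)) := by
  rw [← Fin.append_comp_sumElim]
  rfl

theorem wedge_compLinearMap {p q : ℕ} (β : Form V p) (γ : Form V q) (L : W →ₗ[ℝ] V) :
    (wedge β γ).compLinearMap L = wedge (β.compLinearMap L) (γ.compLinearMap L) := by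
  ext v
  simp only [wedge, AlternatingMap.compLinearMap_apply, AlternatingMap.domDomCongr_apply,
    LinearMap.compAlternatingMap_apply, AlternatingMap.domCoprod_apply, sum_apply]
  congr 1
  refine Finset.sum_congr rfl fun σ _ => ?_
  induction σ using Quotient.inductionOn'
  simp [AlternatingMap.domCoprod.summand_mk'']

theorem eFam_compLinearMap : ∀ {r : ℕ} (g : Fin r → Module.Dual ℝ V) (L : W →ₗ[ℝ] V),
    (eFam g).compLinearMap L = eFam fun i => g i ∘ₗ L
  | 0, _, _ => rfl
  | r + 1, g, L => by
    rw [eFam, eFam, ← eFam_compLinearMap]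
    exact congrArg (castF _) (wedge_compLinearMap _ _ L)

/-- `eFam g` factors through `v ↦ (g i v)ᵢ`. -/
theorem eFam_apply_eq_zero {r : ℕ} (g : Fin r → Module.Dual ℝ V) (y : Fin r → V) (j : Fin r)
    (hj : ∀ i, g i (y j) = 0) : eFam g y = 0 := by
  have hg : g = fun i => LinearMap.proj i ∘ₗ LinearMap.pi g :=
    funext fun i => (LinearMap.proj_pi g i).symm
  rw [hg, ← eFam_compLinearMap, AlternatingMap.compLinearMap_apply]
  exact AlternatingMap.map_coord_zero _ j (funext hj)

theorem eFam_succ_apply {r : ℕ} (g : Fin (r + 1) → Module.Dual ℝ V) (y : Fin (r + 1) → V) :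
    eFam g y = TensorProduct.lid ℝ ℝ ((oneForm (g 0)).domCoprod (eFam fun i => g i.succ)
      (Sum.elim (fun _ => y 0) fun j => y j.succ)) := by
  rw [eFam, castF_apply, ← wedge_append_apply]
  congr 1
  rw [Fin.append_left_eq_cons]
  exact congrArg (· ∘ _) (Fin.cons_self_tail y).symm

theorem eFam_apply_eq_one : ∀ {r : ℕ} (g : Fin r → Module.Dual ℝ V) (x : Fin r → V),
    (∀ i j, g i (x j) = if i = j then 1 else 0) → eFam g x = 1
  | 0, _, _, _ => rfl
  | r + 1, g, x, hgx => by
    rw [eFam_succ_apply, AlternatingMap.domCoprod_apply_eq_tmul, oneForm_apply,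
      eFam_apply_eq_one _ _ fun i j => ?_]
    · simp [hgx]
    · simp [hgx, Fin.succ_inj]
    · intro σ i j hij
      rw [oneForm_apply, Subsingleton.elim 0 i, hij]
      simp [hgx, (Fin.succ_ne_zero j).symm]

theorem wedge_eFam_append_apply {r p : ℕ} (g : Fin r → Module.Dual ℝ V) (α : Form V p)
    (x : Fin r → V) (y : Fin p → V) (hy : ∀ i t, g i (y t) = 0) :
    wedge (eFam g) α (Fin.append x y) = eFam g x * α y := by
  rw [wedge_append_apply, AlternatingMap.domCoprod_apply_eq_tmul _ _ _ fun σ i j hij =>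
    eFam_apply_eq_zero g _ i fun k => by simp [hij, hy]]
  rfl

end SEM

/-- The strictly increasing enumeration of the complement of the range of `v`. -/
theorem existsUnique_strictMono_forall_ne {n p : ℕ} {v : Fin p → Fin n}
    (hv : Function.Injective v) :
    ∃! I : {I : Fin (n - p) → Fin n // StrictMono I}, ∀ s t, I.1 s ≠ v t := by
  classical
  set c := (Finset.univ.image v)ᶜ
  have hc : c.card = n - p := by
    simp [c, Finset.card_compl, Finset.card_image_of_injective _ hv]
  have mem_c : ∀ k, k ∈ c ↔ ∀ t, k ≠ v t := by simp [c, eq_comm]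
  refine ⟨⟨c.orderEmbOfFin hc, (c.orderEmbOfFin hc).strictMono⟩,
    fun s => (mem_c _).1 (c.orderEmbOfFin_mem hc s), fun I hI => Subtype.ext ?_⟩
  exact c.orderEmbOfFin_unique hc (fun s => (mem_c _).2 (hI s)) I.2

theorem statement2_general {V : Type*} [AddCommGroup V] [Module ℝ V] {n p : ℕ}
    (b : Module.Basis (Fin n) ℝ V) (α : SEM.Form V p) :
    ∑ I : {I : Fin (n - p) → Fin n // StrictMono I},
        SEM.icontrFam (fun s => b (I.1 s))
          (SEM.castF (Nat.add_comm (n - p) p)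
            (SEM.wedge (SEM.eFam fun s => b.coord (I.1 s)) α))
      = α := by
  refine b.ext_alternating fun v hv => ?_
  obtain ⟨I₀, hI₀, hunique⟩ := existsUnique_strictMono_forall_ne hv
  simp only [sum_apply, SEM.icontrFam_castF_apply]
  refine (Fintype.sum_eq_single I₀ fun I hI => ?_).trans ?_
  · obtain ⟨s, t, hst⟩ : ∃ s t, I.1 s = v t := by
      by_contra! h
      exact hI (hunique I h)
    exact AlternatingMap.map_eq_zero_of_not_injective _ _ fun hinj =>
      (Fin.append_injective_iff.1 hinj).2.2 s t (by simp [hst])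
  · rw [SEM.wedge_eFam_append_apply _ _ _ _ fun s t => ?_, SEM.eFam_apply_eq_one _ _ fun s t => ?_,
      one_mul]
    · simp [Module.Basis.coord_apply, Finsupp.single_apply, I₀.2.injective.eq_iff, eq_comm]
    · simp [Module.Basis.coord_apply, hI₀ s t]

/-- If `α` is an alternating `p`-form on the `n`-dimensional space `V`
and `r = n - p`, so that each `e^I ∧ α` is a top form, then
`Σ_{I ∈ Inc(n-p,n)} i_I (e^I ∧ α) = α`. -/
theorem statement2 {V : Type*} [AddCommGroup V] [Module ℝ V] {n p : ℕ} (hp : p ≤ n)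
    (b : Module.Basis (Fin n) ℝ V) (α : SEM.Form V p) :
    ∑ I : {I : Fin (n - p) → Fin n // StrictMono I},
        SEM.icontrFam (fun s => b (I.1 s))
          (SEM.castF (Nat.add_comm (n - p) p)
            (SEM.wedge (SEM.eFam fun s => b.coord (I.1 s)) α))
      = α :=
  statement2_general b α
end
end

section
/- Let V be an n-dimensional real vector space equipped with a nondegenerate symmetric bilinear form g, let T̂ : V → V be a linear map, and let Ω be a nonzero alternating n-form on V. Writing ũ = g(u,−) ∈ V* for u ∈ V, the following are equivalent: (i) g(T̂(u), v) = g(T̂(v), u) for all u, v ∈ V; (ii) ṽ ∧ i_{T̂(u)} Ω = ũ ∧ i_{T̂(v)} Ω for all u, v ∈ V. -/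
/- Setting: `V` is an `n`-dimensional real vector space with basis `X_1, …, X_n`
(`b : Basis (Fin n) ℝ V`) and dual basis `e^1, …, e^n` (`b.coord`).  `Λ^p V*` is
modelled by `AlternatingMap ℝ V ℝ (Fin p)`, with the wedge product in the
shuffle (determinant) convention and interior contraction
`(i_v α)(v₁,…,v_{p-1}) = α (v, v₁, …, v_{p-1})`. -/

open scoped TensorProduct

noncomputable section

/-! Since `dim V = n`, the `(n + 1)`-form `f ∧ Ω` vanishes for every covector `f`, and
contracting it with `w` gives `f ∧ i_w Ω = f(w) Ω`. So (ii) says `g(v, T̂u) Ω = g(u, T̂v) Ω`,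
which for `Ω ≠ 0` is (i) by the symmetry of `g`. -/

namespace SEM

open Equiv

variable {V : Type*} [AddCommGroup V] [Module ℝ V]

theorem bijective_mk_swap_inl (m : ℕ) :
    Function.Bijective (fun t : Fin 1 ⊕ Fin m =>
      (Quotient.mk'' (swap (Sum.inl 0) t) : Perm.ModSumCongr (Fin 1) (Fin m))) := by
  constructor
  · intro t₁ t₂ h
    obtain ⟨⟨σ₁, σ₂⟩, hσ⟩ := QuotientGroup.leftRel_apply.mp (Quotient.exact' h)
    have h0 := congrArg (· (Sum.inl 0)) hσ
    simp only [Perm.sumCongrHom_apply, Perm.sumCongr_apply, Sum.map_inl,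
      Subsingleton.elim (σ₁ 0) 0, Perm.coe_mul, Function.comp_apply, Perm.inv_def, swap_apply_left] at h0
    simpa using congrArg (swap (Sum.inl 0) t₁) h0
  · intro c
    induction c using Quotient.inductionOn' with
    | h σ =>
      refine ⟨σ (Sum.inl 0), Quotient.sound' (QuotientGroup.leftRel_apply.mpr ?_)⟩
      refine Perm.mem_sumCongrHom_range_of_perm_mapsTo_inl ?_
      rintro _ ⟨a, rfl⟩
      exact ⟨0, by simp [Subsingleton.elim a 0, Perm.inv_def]⟩

theorem lid_domCoprod_summand_oneForm (f : Module.Dual ℝ V) {m : ℕ} (β : Form V m)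
    (σ : Perm (Fin 1 ⊕ Fin m)) (v : Fin 1 ⊕ Fin m → V) :
    TensorProduct.lid ℝ ℝ (AlternatingMap.domCoprod.summand (oneForm f) β (Quotient.mk'' σ) v) =
      (Perm.sign σ : ℤ) • (f (v (σ (Sum.inl 0))) * β (fun i => v (σ (Sum.inr i)))) := by
  rw [AlternatingMap.domCoprod.summand_mk'', smul_apply,
    MultilinearMap.domDomCongr_apply, MultilinearMap.domCoprod_apply]
  rcases Int.units_eq_one_or (Perm.sign σ) with h | h <;>
    simp [h, oneForm, Units.smul_def]

theorem wedge_oneForm_apply (f : Module.Dual ℝ V) {m : ℕ} (β : Form V m) (x : Fin (1 + m) → V) :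
    wedge (oneForm f) β x =
      f (x (Fin.castAdd m 0)) * β (x ∘ Fin.natAdd 1) -
        ∑ j, f (x (Fin.natAdd 1 j)) *
          β (Function.update (x ∘ Fin.natAdd 1) j (x (Fin.castAdd m 0))) := by
  change TensorProduct.lid ℝ ℝ ((oneForm f).domCoprod β (x ∘ finSumFinEquiv)) = _
  rw [AlternatingMap.domCoprod_apply, sum_apply, map_sum]
  refine (Fintype.sum_bijective _ (bijective_mk_swap_inl m) _ _ fun _ => rfl).symm.trans ?_
  rw [Fintype.sum_sum_type]
  simp only [lid_domCoprod_summand_oneForm, Finset.univ_unique, Finset.sum_singleton,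
    Subsingleton.elim (default : Fin 1) 0, swap_self, Perm.sign_refl,
    Perm.sign_swap (Sum.inl_ne_inr (a := (0 : Fin 1)))]
  simp only [Units.val_one, Units.val_neg, one_smul, neg_smul, sub_eq_add_neg,
    Finset.sum_neg_distrib, Equiv.refl_apply, swap_apply_left, Function.comp_apply,
    finSumFinEquiv_apply_left, finSumFinEquiv_apply_right]
  refine congrArg (_ + ·) (congrArg Neg.neg (Finset.sum_congr rfl fun j _ => ?_))
  congr 2 with i
  rcases eq_or_ne i j with rfl | hij
  · simp
  · simp [swap_apply_of_ne_of_ne, hij]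

theorem form_eq_zero_of_finrank_lt [FiniteDimensional ℝ V] {p : ℕ} (α : Form V p)
    (h : Module.finrank ℝ V < p) : α = 0 := by
  ext x
  refine α.map_linearDependent x fun hx => ?_
  exact (h.trans_le (by simpa using hx.fintype_card_le_finrank)).false

theorem icontr_apply {p : ℕ} (w : V) (α : Form V (p + 1)) (x : Fin p → V) :
    icontr w α x = α (Fin.cons w x) := rfl

theorem comp_finCongr_eq_cons {α : Type*} {m : ℕ} (x : Fin (1 + m) → α) :
    x ∘ finCongr (Nat.add_comm m 1) = Fin.cons (x (Fin.castAdd m 0)) (x ∘ Fin.natAdd 1) := by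
  funext i
  induction i using Fin.cases with
  | zero => rfl
  | succ i =>
    simp only [Function.comp_apply, Fin.cons_succ]
    congr 1
    ext
    simp [Nat.add_comm]

theorem wedge_oneForm_icontr [FiniteDimensional ℝ V] {m : ℕ} (hV : Module.finrank ℝ V ≤ m + 1)
    (f : Module.Dual ℝ V) (w : V) (Ω : Form V (m + 1)) :
    wedge (oneForm f) (icontr w Ω) = f w • castF (Nat.add_comm m 1) Ω := by
  ext x
  simp only [wedge_oneForm_apply, icontr_apply, AlternatingMap.smul_apply, castF,
    AlternatingMap.domDomCongr_apply, comp_finCongr_eq_cons, smul_eq_mul]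
  -- `f ∧ Ω` has degree `m + 2 > dim V`; expand it at `(x₀, w, x₁, …, x_m)`.
  have hz := congrArg
    (· (Fin.append (fun _ : Fin 1 => x (Fin.castAdd m 0)) (Fin.cons w (x ∘ Fin.natAdd 1))))
    (form_eq_zero_of_finrank_lt (wedge (oneForm f) Ω) (by omega))
  have happ : Fin.append (fun _ : Fin 1 => x (Fin.castAdd m 0)) (Fin.cons w (x ∘ Fin.natAdd 1)) ∘
      Fin.natAdd 1 = Fin.cons w (x ∘ Fin.natAdd 1) := by
    funext i; simp
  simp only [wedge_oneForm_apply, Fin.append_left, Fin.append_right, happ, Fin.sum_univ_succ,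
    Fin.cons_zero, Fin.cons_succ, Fin.update_cons_zero, ← Fin.cons_update, Function.comp_apply,
    AlternatingMap.zero_apply] at hz
  linear_combination hz

end SEM

/-- Let `V` be an `n`-dimensional real vector space with a
nondegenerate symmetric bilinear form `g`, let `T̂ : V → V` be linear, and let `Ω` be a
nonzero alternating `n`-form.  Writing `ũ = g(u,−)`, the following are equivalent:
(i) `g(T̂ u, v) = g(T̂ v, u)` for all `u, v`;
(ii) `ṽ ∧ i_{T̂ u} Ω = ũ ∧ i_{T̂ v} Ω` for all `u, v`. -/
theorem statement12 {V : Type*} [AddCommGroup V] [Module ℝ V] (n : ℕ) (hn : 0 < n)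
    (hdim : Module.finrank ℝ V = n)
    (g : V →ₗ[ℝ] V →ₗ[ℝ] ℝ) (hsymm : ∀ u v : V, g u v = g v u)
    (T : V →ₗ[ℝ] V) (Ω : SEM.Form V n) (hΩ : Ω ≠ 0) :
    (∀ u v : V, g (T u) v = g (T v) u) ↔
      (∀ u v : V,
        SEM.wedge (SEM.oneForm (g v))
            (SEM.icontr (T u) (SEM.castF (by omega : n = (n - 1) + 1) Ω))
          = SEM.wedge (SEM.oneForm (g u))
              (SEM.icontr (T v) (SEM.castF (by omega : n = (n - 1) + 1) Ω))) := by
  have : FiniteDimensional ℝ V := FiniteDimensional.of_finrank_pos (hdim ▸ hn)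
  have hΩ' : SEM.castF (Nat.add_comm (n - 1) 1) (SEM.castF (by omega) Ω) ≠ 0 := by
    rwa [Ne, SEM.castF, SEM.castF, AlternatingMap.domDomCongr_eq_zero_iff,
      AlternatingMap.domDomCongr_eq_zero_iff]
  simp only [SEM.wedge_oneForm_icontr (by omega : Module.finrank ℝ V ≤ n - 1 + 1),
    (smul_left_injective ℝ hΩ').eq_iff]
  refine forall₂_congr fun u v => ?_
  rw [hsymm v (T u), hsymm u (T v)]
end
end
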